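/- arXiv:2107.10148 — 3 statements merged into one kernel-verified Lean document; each statement's English description precedes it below -/
import Mathlib

section
/- Let Y₁ and Y₂ be independent unit Fréchet random variables on a probability space, and let μ ∈ ℝ, σ > 0, α₁ > 0, α₂ > 0. Set Q = μ + σ·max(Y₁^{1/α₁}, Y₂^{1/α₂}). Then for every x > μ, P(Q ≤ x) = exp(−σ^{α₁}(x−μ)^{−α₁} − σ^{α₂}(x−μ)^{−α₂}), and for every x ≤ μ, P(Q ≤ x) = 0. (This is the accelerated Fréchet distribution underlying the AcAF model.) -/
open MeasureTheory ProbabilityTheory Filter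

/-!
For `x > μ` put `t = (x - μ) / σ > 0`. Then `Q ≤ x` exactly when `Y₁ ≤ t ^ α₁` and
`Y₂ ≤ t ^ α₂` (the `Yᵢ` being almost surely positive), so independence factors the probability
into two unit Fréchet distribution functions, whose product is the stated exponential. For
`x ≤ μ` the event `Q ≤ x` forces `Y₁ ≤ 0`, which has probability `0`.
-/

lemma ae_nonneg_of_measure_nonpos {Ω : Type*} [MeasurableSpace Ω] {P : Measure Ω} {Y : Ω → ℝ}
    (h : P {ω | Y ω ≤ 0} = 0) : ∀ᵐ ω ∂P, 0 ≤ Y ω :=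
  ae_iff.mpr (measure_mono_null (fun ω (hω : ¬ 0 ≤ Y ω) => (not_le.mp hω).le) h)

lemma one_div_div_rpow {a b : ℝ} (ha : 0 ≤ a) (hb : 0 ≤ b) (α : ℝ) :
    1 / (a / b) ^ α = b ^ α * a ^ (-α) := by
  rw [Real.div_rpow ha hb, Real.rpow_neg ha, one_div_div, div_eq_mul_inv]

lemma max_rpow_inv_le_iff {y₁ y₂ α₁ α₂ t : ℝ} (hy₁ : 0 ≤ y₁) (hy₂ : 0 ≤ y₂) (ht : 0 ≤ t)
    (hα₁ : 0 < α₁) (hα₂ : 0 < α₂) :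
    max (y₁ ^ (1 / α₁)) (y₂ ^ (1 / α₂)) ≤ t ↔ y₁ ≤ t ^ α₁ ∧ y₂ ≤ t ^ α₂ := by
  rw [max_le_iff, one_div, one_div, Real.rpow_inv_le_iff_of_pos hy₁ ht hα₁,
    Real.rpow_inv_le_iff_of_pos hy₂ ht hα₂]

lemma ProbabilityTheory.IndepFun.measure_max_rpow_inv_le {Ω : Type*} [MeasurableSpace Ω]
    {P : Measure Ω} {Y₁ Y₂ : Ω → ℝ} (hindep : IndepFun Y₁ Y₂ P) (h₁ : ∀ᵐ ω ∂P, 0 ≤ Y₁ ω)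
    (h₂ : ∀ᵐ ω ∂P, 0 ≤ Y₂ ω) {α₁ α₂ t : ℝ} (hα₁ : 0 < α₁) (hα₂ : 0 < α₂) (ht : 0 ≤ t) :
    P {ω | max (Y₁ ω ^ (1 / α₁)) (Y₂ ω ^ (1 / α₂)) ≤ t} =
      P {ω | Y₁ ω ≤ t ^ α₁} * P {ω | Y₂ ω ≤ t ^ α₂} := by
  have hsets : {ω | max (Y₁ ω ^ (1 / α₁)) (Y₂ ω ^ (1 / α₂)) ≤ t} =ᵐ[P]
      (Y₁ ⁻¹' Set.Iic (t ^ α₁) ∩ Y₂ ⁻¹' Set.Iic (t ^ α₂) : Set Ω) := by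
    filter_upwards [h₁, h₂] with ω hω₁ hω₂
    exact propext (max_rpow_inv_le_iff hω₁ hω₂ ht hα₁ hα₂)
  rw [measure_congr hsets,
    hindep.measure_inter_preimage_eq_mul _ _ measurableSet_Iic measurableSet_Iic]
  rfl

theorem accelerated_frechet_cdf_general
    {Ω : Type*} [MeasurableSpace Ω] (P : Measure Ω) [IsProbabilityMeasure P]
    (Y₁ Y₂ : Ω → ℝ)
    (hindep : IndepFun Y₁ Y₂ P)
    (hY₁cdf : ∀ y : ℝ, P {ω | Y₁ ω ≤ y} =
      if 0 < y then ENNReal.ofReal (Real.exp (-1 / y)) else 0)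
    (hY₂cdf : ∀ y : ℝ, P {ω | Y₂ ω ≤ y} =
      if 0 < y then ENNReal.ofReal (Real.exp (-1 / y)) else 0)
    (μ σ α₁ α₂ : ℝ) (hσ : 0 < σ) (hα₁ : 0 < α₁) (hα₂ : 0 < α₂)
    (Q : Ω → ℝ)
    (hQ : ∀ ω, Q ω = μ + σ * max (Y₁ ω ^ (1 / α₁)) (Y₂ ω ^ (1 / α₂))) :
    (∀ x : ℝ, μ < x → P {ω | Q ω ≤ x} =
      ENNReal.ofReal (Real.exp (-(σ ^ α₁ * (x - μ) ^ (-α₁)) - σ ^ α₂ * (x - μ) ^ (-α₂)))) ∧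
    (∀ x : ℝ, x ≤ μ → P {ω | Q ω ≤ x} = 0) := by
  have hY₁_nonpos : P {ω | Y₁ ω ≤ 0} = 0 := by simpa using hY₁cdf 0
  have hY₂_nonpos : P {ω | Y₂ ω ≤ 0} = 0 := by simpa using hY₂cdf 0
  have hQ_le (x : ℝ) : {ω | Q ω ≤ x} =
      {ω | max (Y₁ ω ^ (1 / α₁)) (Y₂ ω ^ (1 / α₂)) ≤ (x - μ) / σ} := by
    ext ω
    simp only [Set.mem_ofPred_eq, hQ, le_div_iff₀ hσ]
    constructor <;> intro <;> linarith
  refine ⟨fun x hx => ?_, fun x hx => ?_⟩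
  · have hxμ : 0 < x - μ := sub_pos.mpr hx
    have ht : 0 < (x - μ) / σ := div_pos hxμ hσ
    have hcdf {Y : Ω → ℝ} (hY : ∀ y : ℝ, P {ω | Y ω ≤ y} =
        if 0 < y then ENNReal.ofReal (Real.exp (-1 / y)) else 0) (α : ℝ) :
        P {ω | Y ω ≤ ((x - μ) / σ) ^ α} =
          ENNReal.ofReal (Real.exp (-(σ ^ α * (x - μ) ^ (-α)))) := by
      rw [hY, if_pos (Real.rpow_pos_of_pos ht α), neg_div, one_div_div_rpow hxμ.le hσ.le]
    rw [hQ_le, hindep.measure_max_rpow_inv_le (ae_nonneg_of_measure_nonpos hY₁_nonpos)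
      (ae_nonneg_of_measure_nonpos hY₂_nonpos) hα₁ hα₂ ht.le, hcdf hY₁cdf, hcdf hY₂cdf,
      ← ENNReal.ofReal_mul (Real.exp_nonneg _), ← Real.exp_add, ← sub_eq_add_neg]
  · refine measure_mono_null (fun ω hω => ?_) hY₁_nonpos
    rw [hQ_le] at hω
    change Y₁ ω ≤ 0
    by_contra! hω₁
    have hle : Y₁ ω ^ (1 / α₁) ≤ (x - μ) / σ := (le_max_left _ _).trans hω
    have ht : (x - μ) / σ ≤ 0 := div_nonpos_of_nonpos_of_nonneg (sub_nonpos.mpr hx) hσ.le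
    linarith [Real.rpow_pos_of_pos hω₁ (1 / α₁)]

/-- distribution function of the accelerated Fréchet random variable
`Q = μ + σ·max(Y₁^{1/α₁}, Y₂^{1/α₂})` built from two independent unit Fréchet
random variables `Y₁`, `Y₂`. -/
theorem accelerated_frechet_cdf
    {Ω : Type*} [MeasurableSpace Ω] (P : Measure Ω) [IsProbabilityMeasure P]
    (Y₁ Y₂ : Ω → ℝ) (hY₁m : Measurable Y₁) (hY₂m : Measurable Y₂)
    (hindep : IndepFun Y₁ Y₂ P)
    (hY₁cdf : ∀ y : ℝ, P {ω | Y₁ ω ≤ y} =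
      if 0 < y then ENNReal.ofReal (Real.exp (-1 / y)) else 0)
    (hY₂cdf : ∀ y : ℝ, P {ω | Y₂ ω ≤ y} =
      if 0 < y then ENNReal.ofReal (Real.exp (-1 / y)) else 0)
    (μ σ α₁ α₂ : ℝ) (hσ : 0 < σ) (hα₁ : 0 < α₁) (hα₂ : 0 < α₂)
    (Q : Ω → ℝ)
    (hQ : ∀ ω, Q ω = μ + σ * max (Y₁ ω ^ (1 / α₁)) (Y₂ ω ^ (1 / α₂))) :
    (∀ x : ℝ, μ < x → P {ω | Q ω ≤ x} =
      ENNReal.ofReal (Real.exp (-(σ ^ α₁ * (x - μ) ^ (-α₁)) - σ ^ α₂ * (x - μ) ^ (-α₂)))) ∧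
    (∀ x : ℝ, x ≤ μ → P {ω | Q ω ≤ x} = 0) :=
  accelerated_frechet_cdf_general P Y₁ Y₂ hindep hY₁cdf hY₂cdf μ σ α₁ α₂ hσ hα₁ hα₂ Q hQ
end

section
/- Let Y₁ and Y₂ be independent unit Fréchet random variables on a probability space, let μ ∈ ℝ, σ > 0, α₁ > 0, α₂ > 0, and set Q = μ + σ·max(Y₁^{1/α₁}, Y₂^{1/α₂}) (an accelerated Fréchet random variable). Then for every real k > 0, E[|Q|^k] < ∞ if and only if min(α₁, α₂) > k. In particular, the mean and variance of Q exist if and only if both tail indices α₁ and α₂ are greater than 1 and 2, respectively. -/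
open MeasureTheory ProbabilityTheory Filter

set_option maxHeartbeats 1000000

private lemma one_sub_exp_le (x : ℝ) : 1 - Real.exp (-x) ≤ x := by
  linarith [Real.add_one_le_exp (-x)]

private lemma half_le_one_sub_exp {x : ℝ} (h0 : 0 ≤ x) (h1 : x ≤ 1) :
    x / 2 ≤ 1 - Real.exp (-x) := by
  have he : Real.exp (-x) * Real.exp x = 1 := by rw [← Real.exp_add]; simp
  have h2 : x + 1 ≤ Real.exp x := Real.add_one_le_exp x
  have h3 : (0:ℝ) < Real.exp (-x) := Real.exp_pos _
  nlinarith [mul_le_mul_of_nonneg_left h2 h3.le]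

private lemma rpow_add_le {a b k : ℝ} (ha : 0 ≤ a) (hb : 0 ≤ b) (hk : 0 ≤ k) :
    (a + b) ^ k ≤ 2 ^ k * (a ^ k + b ^ k) := by
  have h1 : a + b ≤ 2 * max a b := by
    rcases le_total a b with h | h
    · rw [max_eq_right h]; linarith
    · rw [max_eq_left h]; linarith
  calc (a + b) ^ k ≤ (2 * max a b) ^ k :=
        Real.rpow_le_rpow (by positivity) h1 hk
    _ = 2 ^ k * (max a b) ^ k := Real.mul_rpow (by norm_num) (le_max_of_le_left ha)
    _ ≤ 2 ^ k * (a ^ k + b ^ k) := by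
        have : (max a b) ^ k ≤ a ^ k + b ^ k := by
          rcases le_total a b with h | h
          · rw [max_eq_right h]; nlinarith [Real.rpow_nonneg ha k]
          · rw [max_eq_left h]; nlinarith [Real.rpow_nonneg hb k]
        nlinarith [Real.rpow_nonneg (show (0:ℝ) ≤ 2 by norm_num) k]

private lemma frechet_pos {Ω : Type*} [MeasurableSpace Ω] {P : Measure Ω} {Y : Ω → ℝ}
    (hcdf : ∀ y : ℝ, P {ω | Y ω ≤ y} = if 0 < y then ENNReal.ofReal (Real.exp (-1 / y)) else 0) :
    ∀ᵐ ω ∂P, 0 < Y ω := by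
  have h0 := hcdf 0
  rw [if_neg (lt_irrefl 0)] at h0
  rw [ae_iff]
  simpa [not_lt] using h0

private lemma frechet_tail {Ω : Type*} [MeasurableSpace Ω] {P : Measure Ω}
    [IsProbabilityMeasure P] {Y : Ω → ℝ} (hm : Measurable Y)
    (hcdf : ∀ y : ℝ, P {ω | Y ω ≤ y} = if 0 < y then ENNReal.ofReal (Real.exp (-1 / y)) else 0)
    {s : ℝ} (hs : 0 < s) :
    P {ω | s < Y ω} = ENNReal.ofReal (1 - Real.exp (-1 / s)) := by
  have h1 : {ω | s < Y ω} = {ω | Y ω ≤ s}ᶜ := by ext ω; simp [not_le]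
  have hms : MeasurableSet {ω | Y ω ≤ s} := measurableSet_le hm measurable_const
  rw [h1, prob_compl_eq_one_sub hms, hcdf s, if_pos hs,
    ENNReal.ofReal_sub _ (Real.exp_nonneg _), ENNReal.ofReal_one]

private lemma frechet_rpow_integrable {Ω : Type*} [MeasurableSpace Ω] (P : Measure Ω)
    [IsProbabilityMeasure P] {Y : Ω → ℝ} (hm : Measurable Y)
    (hcdf : ∀ y : ℝ, P {ω | Y ω ≤ y} = if 0 < y then ENNReal.ofReal (Real.exp (-1 / y)) else 0)
    {p : ℝ} (hp : 0 < p) :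
    Integrable (fun ω => Y ω ^ p) P ↔ p < 1 := by
  have hpos := frechet_pos (P := P) hcdf
  have hnn : 0 ≤ᵐ[P] fun ω => Y ω ^ p := hpos.mono fun ω h => Real.rpow_nonneg h.le p
  have hmeas : Measurable fun ω => Y ω ^ p := by fun_prop
  rw [← lintegral_ofReal_ne_top_iff_integrable hmeas.aestronglyMeasurable hnn,
    lintegral_eq_lintegral_meas_lt P hnn hmeas.aemeasurable]
  have htail : ∀ᵐ t ∂(volume.restrict (Set.Ioi (0:ℝ))),
      P {a | t < Y a ^ p} = ENNReal.ofReal (1 - Real.exp (-1 / t ^ p⁻¹)) := by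
    filter_upwards [ae_restrict_mem measurableSet_Ioi] with t ht
    have ht0 : (0:ℝ) < t := ht
    have hseq : {a | t < Y a ^ p} =ᵐ[P] {a | t ^ p⁻¹ < Y a} := by
      filter_upwards [hpos] with a ha
      simp only [Set.mem_setOf_eq, eq_iff_iff]
      exact (Real.rpow_inv_lt_iff_of_pos ht0.le ha.le hp).symm
    rw [measure_congr hseq, frechet_tail hm hcdf (Real.rpow_pos_of_pos ht0 _)]
  rw [lintegral_congr_ae htail]
  by_cases hp1 : p < 1
  · simp only [hp1, iff_true]
    have hsplit : ∫⁻ t in Set.Ioi (0:ℝ), ENNReal.ofReal (1 - Real.exp (-1 / t ^ p⁻¹)) ≤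
        (∫⁻ t in Set.Ioc (0:ℝ) 1, ENNReal.ofReal (1 - Real.exp (-1 / t ^ p⁻¹))) +
        ∫⁻ t in Set.Ioi (1:ℝ), ENNReal.ofReal (1 - Real.exp (-1 / t ^ p⁻¹)) := by
      rw [← Set.Ioc_union_Ioi_eq_Ioi (zero_le_one (α := ℝ))]
      exact lintegral_union_le _ _ _
    have hb1 : (∫⁻ t in Set.Ioc (0:ℝ) 1, ENNReal.ofReal (1 - Real.exp (-1 / t ^ p⁻¹))) ≤ 1 := by
      calc (∫⁻ t in Set.Ioc (0:ℝ) 1, ENNReal.ofReal (1 - Real.exp (-1 / t ^ p⁻¹)))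
          ≤ ∫⁻ _ in Set.Ioc (0:ℝ) 1, 1 := by
            refine lintegral_mono fun t => ?_
            exact ENNReal.ofReal_le_one.2 (by linarith [Real.exp_nonneg (-1 / t ^ p⁻¹)])
        _ = 1 := by simp [Real.volume_Ioc]
    have hb2 : (∫⁻ t in Set.Ioi (1:ℝ), ENNReal.ofReal (1 - Real.exp (-1 / t ^ p⁻¹))) < ⊤ := by
      have hle : (∫⁻ t in Set.Ioi (1:ℝ), ENNReal.ofReal (1 - Real.exp (-1 / t ^ p⁻¹))) ≤
          ∫⁻ t in Set.Ioi (1:ℝ), ENNReal.ofReal (t ^ (-p⁻¹)) := by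
        refine lintegral_mono_ae ?_
        filter_upwards [ae_restrict_mem measurableSet_Ioi] with t ht
        have ht0 : (0:ℝ) < t := lt_trans one_pos ht
        have hs0 : (0:ℝ) < t ^ p⁻¹ := Real.rpow_pos_of_pos ht0 _
        refine ENNReal.ofReal_le_ofReal ?_
        have hx := one_sub_exp_le (1 / t ^ p⁻¹)
        rw [Real.rpow_neg ht0.le]
        calc 1 - Real.exp (-1 / t ^ p⁻¹) = 1 - Real.exp (-(1 / t ^ p⁻¹)) := by rw [neg_div]
          _ ≤ 1 / t ^ p⁻¹ := hx
          _ = (t ^ p⁻¹)⁻¹ := one_div _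
      have hinv : (1:ℝ) < p⁻¹ := (one_lt_inv₀ hp).2 hp1
      have hint : IntegrableOn (fun t : ℝ => t ^ (-p⁻¹)) (Set.Ioi 1) :=
        integrableOn_Ioi_rpow_of_lt (by linarith) one_pos
      have hnn' : 0 ≤ᵐ[volume.restrict (Set.Ioi (1:ℝ))] fun t : ℝ => t ^ (-p⁻¹) := by
        filter_upwards [ae_restrict_mem measurableSet_Ioi] with t ht
        have h0t : (0:ℝ) < t := lt_trans one_pos ht
        simp only [Pi.zero_apply]
        positivity
      have := (lintegral_ofReal_ne_top_iff_integrable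
        (by fun_prop : Measurable fun t : ℝ => t ^ (-p⁻¹)).aestronglyMeasurable hnn').2 hint
      exact lt_of_le_of_lt hle (lt_top_iff_ne_top.2 this)
    exact ne_of_lt (lt_of_le_of_lt hsplit
      (ENNReal.add_lt_top.2 ⟨lt_of_le_of_lt hb1 ENNReal.one_lt_top, hb2⟩))
  · simp only [hp1, iff_false, ne_eq, not_not]
    push_neg at hp1
    have hinv : p⁻¹ ≤ 1 := inv_le_one_of_one_le₀ hp1
    have hone : (∫⁻ t in Set.Ioi (1:ℝ), ENNReal.ofReal (t ^ (-p⁻¹) / 2)) = ⊤ := by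
      by_contra hne
      have hnn' : 0 ≤ᵐ[volume.restrict (Set.Ioi (1:ℝ))] fun t : ℝ => t ^ (-p⁻¹) / 2 := by
        filter_upwards [ae_restrict_mem measurableSet_Ioi] with t ht
        have h0t : (0:ℝ) < t := lt_trans one_pos ht
        simp only [Pi.zero_apply]
        positivity
      have hint := (lintegral_ofReal_ne_top_iff_integrable
        (by fun_prop : Measurable fun t : ℝ => t ^ (-p⁻¹) / 2).aestronglyMeasurable hnn').1 hne
      have hint2 : IntegrableOn (fun t : ℝ => t ^ (-p⁻¹)) (Set.Ioi 1) := by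
        have h2 : IntegrableOn (fun x : ℝ => 2 * (x ^ (-p⁻¹) / 2)) (Set.Ioi 1) :=
          hint.const_mul 2
        exact h2.congr_fun (fun t _ => by ring) measurableSet_Ioi
      rw [integrableOn_Ioi_rpow_iff one_pos] at hint2
      have : (1:ℝ) < p⁻¹ := by linarith
      linarith
    refine eq_top_iff.2 ?_
    rw [← hone]
    refine le_trans ?_ (lintegral_mono_set (Set.Ioi_subset_Ioi zero_le_one))
    refine lintegral_mono_ae ?_
    filter_upwards [ae_restrict_mem measurableSet_Ioi] with t ht
    have ht0 : (0:ℝ) < t := lt_trans one_pos ht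
    have hs1 : (1:ℝ) ≤ t ^ p⁻¹ := Real.one_le_rpow ht.le (inv_nonneg.2 hp.le)
    have hs0 : (0:ℝ) < t ^ p⁻¹ := lt_of_lt_of_le one_pos hs1
    refine ENNReal.ofReal_le_ofReal ?_
    have hx0 : (0:ℝ) ≤ 1 / t ^ p⁻¹ := by positivity
    have hx1 : 1 / t ^ p⁻¹ ≤ 1 := by
      rw [div_le_one hs0]; exact hs1
    have := half_le_one_sub_exp hx0 hx1
    rw [Real.rpow_neg ht0.le, ← one_div]
    calc 1 / t ^ p⁻¹ / 2 ≤ 1 - Real.exp (-(1 / t ^ p⁻¹)) := this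
      _ = 1 - Real.exp (-1 / t ^ p⁻¹) := by rw [neg_div]

private lemma integrable_max_iff' {Ω : Type*} [MeasurableSpace Ω] {P : Measure Ω} {f g : Ω → ℝ}
    (hf : AEStronglyMeasurable f P) (hg : AEStronglyMeasurable g P)
    (hfnn : 0 ≤ᵐ[P] f) (hgnn : 0 ≤ᵐ[P] g) :
    Integrable (fun ω => max (f ω) (g ω)) P ↔ Integrable f P ∧ Integrable g P := by
  constructor
  · intro h
    refine ⟨h.mono' hf ?_, h.mono' hg ?_⟩
    · filter_upwards [hfnn] with ω h1
      rw [Real.norm_eq_abs, abs_of_nonneg h1]; exact le_max_left _ _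
    · filter_upwards [hgnn] with ω h2
      rw [Real.norm_eq_abs, abs_of_nonneg h2]; exact le_max_right _ _
  · rintro ⟨h1, h2⟩
    refine (h1.add h2).mono' (hf.sup hg) ?_
    filter_upwards [hfnn, hgnn] with ω hh1 hh2
    rw [Real.norm_eq_abs, abs_of_nonneg (le_max_of_le_left hh1)]
    exact max_le (le_add_of_nonneg_right hh2) (le_add_of_nonneg_left hh1)

/-- an accelerated Fréchet random variable
`Q = μ + σ·max(Y₁^{1/α₁}, Y₂^{1/α₂})` (with `Y₁, Y₂` independent unit Fréchet) has a
finite `k`-th absolute moment if and only if `min(α₁, α₂) > k`; in particular the mean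
and variance of `Q` exist if and only if `min(α₁, α₂) > 1` and `min(α₁, α₂) > 2`,
respectively. -/
theorem accelerated_frechet_moment_finite_iff
    {Ω : Type*} [MeasurableSpace Ω] (P : Measure Ω) [IsProbabilityMeasure P]
    (Y₁ Y₂ : Ω → ℝ) (hY₁m : Measurable Y₁) (hY₂m : Measurable Y₂)
    (hindep : IndepFun Y₁ Y₂ P)
    (hY₁cdf : ∀ y : ℝ, P {ω | Y₁ ω ≤ y} =
      if 0 < y then ENNReal.ofReal (Real.exp (-1 / y)) else 0)
    (hY₂cdf : ∀ y : ℝ, P {ω | Y₂ ω ≤ y} =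
      if 0 < y then ENNReal.ofReal (Real.exp (-1 / y)) else 0)
    (μ σ α₁ α₂ : ℝ) (hσ : 0 < σ) (hα₁ : 0 < α₁) (hα₂ : 0 < α₂)
    (Q : Ω → ℝ)
    (hQ : ∀ ω, Q ω = μ + σ * max (Y₁ ω ^ (1 / α₁)) (Y₂ ω ^ (1 / α₂))) :
    (∀ k : ℝ, 0 < k → (Integrable (fun ω => |Q ω| ^ k) P ↔ min α₁ α₂ > k)) ∧
    (Integrable Q P ↔ min α₁ α₂ > 1) ∧
    (Integrable (fun ω => (Q ω) ^ 2) P ↔ min α₁ α₂ > 2) := by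
  set g : Ω → ℝ := fun ω => max (Y₁ ω ^ (1 / α₁)) (Y₂ ω ^ (1 / α₂)) with hg
  have hpos1 := frechet_pos (P := P) hY₁cdf
  have hpos2 := frechet_pos (P := P) hY₂cdf
  have hgm : Measurable g := by fun_prop
  have hgpos : ∀ᵐ ω ∂P, 0 < g ω := by
    filter_upwards [hpos1] with ω h1
    exact lt_of_lt_of_le (Real.rpow_pos_of_pos h1 _) (le_max_left _ _)
  have hQeq : Q = fun ω => μ + σ * g ω := funext hQ
  have hQm : Measurable Q := by rw [hQeq]; fun_prop
  have key : ∀ k : ℝ, 0 < k → (Integrable (fun ω => |Q ω| ^ k) P ↔ min α₁ α₂ > k) := by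
    intro k hk
    -- step 1 : integrability of g^k
    have hstep1 : Integrable (fun ω => g ω ^ k) P ↔ min α₁ α₂ > k := by
      have hcongr : (fun ω => g ω ^ k) =ᵐ[P]
          fun ω => max (Y₁ ω ^ (k / α₁)) (Y₂ ω ^ (k / α₂)) := by
        filter_upwards [hpos1, hpos2] with ω h1 h2
        have e1 : (Y₁ ω ^ (1 / α₁)) ^ k = Y₁ ω ^ (k / α₁) := by
          rw [← Real.rpow_mul h1.le]; ring_nf
        have e2 : (Y₂ ω ^ (1 / α₂)) ^ k = Y₂ ω ^ (k / α₂) := by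
          rw [← Real.rpow_mul h2.le]; ring_nf
        rcases le_total (Y₁ ω ^ (1 / α₁)) (Y₂ ω ^ (1 / α₂)) with h | h
        · have hle : Y₁ ω ^ (k / α₁) ≤ Y₂ ω ^ (k / α₂) := by
            rw [← e1, ← e2]
            exact Real.rpow_le_rpow (Real.rpow_nonneg h1.le _) h hk.le
          simp only [hg, max_eq_right h, max_eq_right hle, e2]
        · have hle : Y₂ ω ^ (k / α₂) ≤ Y₁ ω ^ (k / α₁) := by
            rw [← e1, ← e2]
            exact Real.rpow_le_rpow (Real.rpow_nonneg h2.le _) h hk.le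
          simp only [hg, max_eq_left h, max_eq_left hle, e1]
      rw [integrable_congr hcongr,
        integrable_max_iff' (by fun_prop : Measurable fun ω => Y₁ ω ^ (k / α₁)).aestronglyMeasurable
          (by fun_prop : Measurable fun ω => Y₂ ω ^ (k / α₂)).aestronglyMeasurable
          (hpos1.mono fun ω h => Real.rpow_nonneg h.le _)
          (hpos2.mono fun ω h => Real.rpow_nonneg h.le _),
        frechet_rpow_integrable P hY₁m hY₁cdf (div_pos hk hα₁),
        frechet_rpow_integrable P hY₂m hY₂cdf (div_pos hk hα₂),
        div_lt_one hα₁, div_lt_one hα₂]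
      rw [gt_iff_lt, lt_min_iff]
    rw [← hstep1]
    -- step 2 : |Q|^k integrable ↔ g^k integrable
    constructor
    · intro h
      have hb : Integrable (fun ω =>
          2 ^ k / σ ^ k * |Q ω| ^ k + 2 ^ k / σ ^ k * |μ| ^ k) P :=
        (h.const_mul _).add (integrable_const _)
      refine hb.mono' (by fun_prop : Measurable fun ω => g ω ^ k).aestronglyMeasurable ?_
      filter_upwards [hgpos] with ω hω
      rw [Real.norm_eq_abs, abs_of_nonneg (Real.rpow_nonneg hω.le k)]
      have h1 : g ω ≤ (|Q ω| + |μ|) / σ := by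
        rw [le_div_iff₀ hσ]
        have h2 : σ * g ω = Q ω - μ := by rw [hQ ω]; ring
        have := le_abs_self (Q ω)
        have := neg_abs_le μ
        nlinarith
      calc g ω ^ k ≤ ((|Q ω| + |μ|) / σ) ^ k := Real.rpow_le_rpow hω.le h1 hk.le
        _ = (|Q ω| + |μ|) ^ k / σ ^ k := Real.div_rpow (by positivity) hσ.le k
        _ ≤ 2 ^ k * (|Q ω| ^ k + |μ| ^ k) / σ ^ k := by
            gcongr
            exact rpow_add_le (abs_nonneg _) (abs_nonneg _) hk.le
        _ = 2 ^ k / σ ^ k * |Q ω| ^ k + 2 ^ k / σ ^ k * |μ| ^ k := by ring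
    · intro h
      have hb : Integrable (fun ω =>
          2 ^ k * σ ^ k * g ω ^ k + 2 ^ k * |μ| ^ k) P :=
        (h.const_mul _).add (integrable_const _)
      refine hb.mono' (by fun_prop : Measurable fun ω => |Q ω| ^ k).aestronglyMeasurable ?_
      filter_upwards [hgpos] with ω hω
      rw [Real.norm_eq_abs, abs_of_nonneg (Real.rpow_nonneg (abs_nonneg _) k)]
      have h1 : |Q ω| ≤ |μ| + σ * g ω := by
        rw [hQ ω]
        calc |μ + σ * g ω| ≤ |μ| + |σ * g ω| := abs_add_le _ _
          _ = |μ| + σ * g ω := by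
              rw [abs_of_nonneg (by positivity : (0:ℝ) ≤ σ * g ω)]
      calc |Q ω| ^ k ≤ (|μ| + σ * g ω) ^ k :=
            Real.rpow_le_rpow (abs_nonneg _) h1 hk.le
        _ ≤ 2 ^ k * (|μ| ^ k + (σ * g ω) ^ k) :=
            rpow_add_le (abs_nonneg _) (by positivity) hk.le
        _ = 2 ^ k * (|μ| ^ k + σ ^ k * g ω ^ k) := by
            rw [Real.mul_rpow hσ.le hω.le]
        _ = 2 ^ k * σ ^ k * g ω ^ k + 2 ^ k * |μ| ^ k := by ring
  refine ⟨key, ?_, ?_⟩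
  · have h1 := key 1 one_pos
    have habs : Integrable (fun ω => |Q ω|) P ↔ Integrable Q P := by
      simpa [Real.norm_eq_abs] using integrable_norm_iff hQm.aestronglyMeasurable
    simp only [Real.rpow_one] at h1
    rw [← h1, habs]
  · have h2 := key 2 two_pos
    have heq : (fun ω => Q ω ^ 2) = fun ω => |Q ω| ^ (2:ℝ) := by
      funext ω
      rw [show ((2:ℝ)) = ((2:ℕ):ℝ) by norm_num, Real.rpow_natCast, sq_abs]
    rw [heq]
    exact h2
end

section
/- In the two-group factor-model setup, suppose α₁ = α₂ = α, p₁(n)/p₂(n) → C for some C > 0, and a_{1,p₁(n)} / a_{2,p₂(n)} → a for some constant a > 0. Then, for every x > 0, P(Q_{p₁(n), p₂(n)} ≤ a_{1,p₁(n)} x) → Ψ_α(x) · Ψ_α(a x) as n → ∞. (Proposition 2, Case 2, first subcase.) -/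
/-!
Conditionally on the factor `Z` the noise variables are independent, so
`P(Q ≤ t) = E[∏ᵢ F₁((t - fᵢ(Z))/σᵢ) · ∏ⱼ F₂((t - gⱼ(Z))/σ̃ⱼ)]`.
Take `t = a₁ x`. For a fixed value of `Z` the shifts `fᵢ(Z)`, `gⱼ(Z)` are bounded, so the
factors of the first product are `1 - uₙᵢ` with `uₙᵢ → 0` uniformly in `i` and, by the tail
condition, `∑ᵢ uₙᵢ → x^{-α}`; the first product therefore tends to `exp (-x^{-α}) = Ψ_α(x)`.
Since `a₁/a₂ → a`, the same argument gives `Ψ_α(a x)` for the second group, and dominated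
convergence in `Z` yields the limit of `P(Q ≤ a₁ x)`.
-/

open MeasureTheory ProbabilityTheory Filter

noncomputable section

/-- The Fréchet distribution function with tail index `α`. -/
def frechetCDF (α x : ℝ) : ℝ := if 0 < x then Real.exp (-x ^ (-α)) else 0

/-- The norming constant `a_p = (Σ_{i<p} σ_i^α)^{1/α}`. -/
def normConst (σ : ℕ → ℝ) (α : ℝ) (p : ℕ) : ℝ :=
  (∑ i ∈ Finset.range p, σ i ^ α) ^ (1 / α)

/-- Maximum of the first `p₁` variables of the first group and the first `p₂`
variables of the second group. -/
def Qmax {Ω : Type*} (X₁ X₂ : ℕ → Ω → ℝ) (p₁ p₂ : ℕ) (ω : Ω) : ℝ :=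
  max (⨆ i : Fin p₁, X₁ i ω) (⨆ j : Fin p₂, X₂ j ω)

/-- Codomains of the family consisting of the factor `Z` and the two noise arrays. -/
def mixCodom (d : ℕ) : Unit ⊕ ℕ ⊕ ℕ → Type
  | Sum.inl _ => Fin d → ℝ
  | Sum.inr _ => ℝ

instance mixCodomMeasurableSpace (d : ℕ) : ∀ i, MeasurableSpace (mixCodom d i)
  | Sum.inl _ => inferInstanceAs (MeasurableSpace (Fin d → ℝ))
  | Sum.inr (Sum.inl _) => inferInstanceAs (MeasurableSpace ℝ)
  | Sum.inr (Sum.inr _) => inferInstanceAs (MeasurableSpace ℝ)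

/-- The family consisting of the factor `Z` and the two noise arrays. -/
def mixFun {Ω : Type*} {d : ℕ} (Z : Ω → Fin d → ℝ) (ε₁ ε₂ : ℕ → Ω → ℝ) :
    ∀ i : Unit ⊕ ℕ ⊕ ℕ, Ω → mixCodom d i
  | Sum.inl _ => Z
  | Sum.inr (Sum.inl i) => ε₁ i
  | Sum.inr (Sum.inr j) => ε₂ j

open Topology Finset Function

/-- Convergence along `triangularAtTop p` is convergence as `n → ∞`, uniformly in `i < p n`. -/
def triangularAtTop (p : ℕ → ℕ) : Filter (ℕ × ℕ) :=
  atTop.comap Prod.fst ⊓ 𝓟 {q | q.2 < p q.1}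

section Triangular

variable {p : ℕ → ℕ}

lemma eventually_triangularAtTop {P : ℕ × ℕ → Prop} :
    (∀ᶠ q in triangularAtTop p, P q) ↔ ∀ᶠ n in atTop, ∀ i < p n, P (n, i) := by
  simp only [triangularAtTop, eventually_inf_principal, eventually_comap, Set.mem_ofPred_eq]
  refine eventually_congr (Eventually.of_forall fun n => ?_)
  refine ⟨fun h i hi => h (n, i) rfl hi, ?_⟩
  rintro h ⟨m, i⟩ rfl hi
  exact h i hi

lemma tendsto_fst_triangularAtTop : Tendsto Prod.fst (triangularAtTop p) atTop :=
  tendsto_comap.mono_left inf_le_left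

lemma tendsto_sum_mul_of_tendsto_zero {w e : ℕ → ℕ → ℝ} {W : ℝ}
    (hw : ∀ᶠ n in atTop, ∀ i < p n, 0 ≤ w n i)
    (hW : Tendsto (fun n => ∑ i ∈ range (p n), w n i) atTop (𝓝 W))
    (he : Tendsto (uncurry e) (triangularAtTop p) (𝓝 0)) :
    Tendsto (fun n => ∑ i ∈ range (p n), w n i * e n i) atTop (𝓝 0) := by
  rw [Metric.tendsto_nhds]
  intro δ hδ
  have hK : 0 < |W| + 1 := by positivity
  have he' : ∀ᶠ q in triangularAtTop p, |uncurry e q| < δ / (|W| + 1) := by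
    simpa using (Metric.tendsto_nhds.1 he) _ (div_pos hδ hK)
  filter_upwards [hw, eventually_triangularAtTop.1 he',
    hW.eventually_lt_const (lt_of_le_of_lt (le_abs_self W) (lt_add_one _))] with n hw hn hWn
  rw [Real.dist_0_eq_abs]
  calc |∑ i ∈ range (p n), w n i * e n i| ≤ ∑ i ∈ range (p n), w n i * |e n i| := by
        refine (abs_sum_le_sum_abs _ _).trans (sum_le_sum fun i hi => ?_)
        rw [abs_mul, abs_of_nonneg (hw i (mem_range.1 hi))]
    _ ≤ ∑ i ∈ range (p n), w n i * (δ / (|W| + 1)) := sum_le_sum fun i hi =>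
        mul_le_mul_of_nonneg_left (hn i (mem_range.1 hi)).le (hw i (mem_range.1 hi))
    _ = (∑ i ∈ range (p n), w n i) * (δ / (|W| + 1)) := (sum_mul _ _ _).symm
    _ < (|W| + 1) * (δ / (|W| + 1)) := by gcongr
    _ = δ := mul_div_cancel₀ _ hK.ne'

lemma tendsto_sum_mul_of_tendsto_one {w r : ℕ → ℕ → ℝ} {W : ℝ}
    (hw : ∀ᶠ n in atTop, ∀ i < p n, 0 ≤ w n i)
    (hW : Tendsto (fun n => ∑ i ∈ range (p n), w n i) atTop (𝓝 W))
    (hr : Tendsto (uncurry r) (triangularAtTop p) (𝓝 1)) :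
    Tendsto (fun n => ∑ i ∈ range (p n), w n i * r n i) atTop (𝓝 W) := by
  have hr' : Tendsto (uncurry fun n i => r n i - 1) (triangularAtTop p) (𝓝 0) := by
    simpa [uncurry_def] using hr.sub_const 1
  have := hW.add (tendsto_sum_mul_of_tendsto_zero hw hW hr')
  rw [add_zero] at this
  refine this.congr fun n => ?_
  rw [← sum_add_distrib]
  exact sum_congr rfl fun i _ => by ring

lemma tendsto_prod_one_sub {u : ℕ → ℕ → ℝ} {l : ℝ}
    (hu0 : ∀ᶠ n in atTop, ∀ i < p n, 0 ≤ u n i)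
    (hu : Tendsto (uncurry u) (triangularAtTop p) (𝓝 0))
    (hsum : Tendsto (fun n => ∑ i ∈ range (p n), u n i) atTop (𝓝 l)) :
    Tendsto (fun n => ∏ i ∈ range (p n), (1 - u n i)) atTop (𝓝 (Real.exp (-l))) := by
  have hsmall : ∀ᶠ n in atTop, ∀ i < p n, 0 ≤ u n i ∧ u n i ≤ 1 / 2 := by
    filter_upwards [hu0, eventually_triangularAtTop.1 (hu.eventually (ge_mem_nhds one_half_pos))]
      with n h0 h1 i hi using ⟨h0 i hi, h1 i hi⟩
  -- `log (1 - u) = -u + O(u²)`, and `∑ᵢ uₙᵢ² ≤ (maxᵢ uₙᵢ) ∑ᵢ uₙᵢ → 0`.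
  have hlog_err : ∀ᶠ n in atTop, ∀ i < p n,
      |Real.log (1 - u n i) + u n i| ≤ u n i * (2 * u n i) := by
    filter_upwards [hsmall] with n hn i hi
    obtain ⟨h0, h1⟩ := hn i hi
    have h := Real.abs_log_sub_add_sum_range_le (show |u n i| < 1 by
      rw [abs_of_nonneg h0]; linarith) 1
    simp only [range_one, sum_singleton, zero_add, pow_one, Nat.cast_zero, div_one,
      abs_of_nonneg h0] at h
    calc _ = |u n i + Real.log (1 - u n i)| := by rw [add_comm]
      _ ≤ u n i ^ 2 / (1 - u n i) := h
      _ ≤ u n i ^ 2 / (1 / 2) := by gcongr; linarith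
      _ = _ := by ring
  have herr : Tendsto (fun n => ∑ i ∈ range (p n), (Real.log (1 - u n i) + u n i)) atTop
      (𝓝 0) := by
    refine squeeze_zero_norm' ?_ (tendsto_sum_mul_of_tendsto_zero hu0 hsum
      (e := fun n i => 2 * u n i) (by simpa [uncurry_def] using hu.const_mul 2))
    filter_upwards [hlog_err] with n hn
    exact (norm_sum_le _ _).trans (sum_le_sum fun i hi => hn i (mem_range.1 hi))
  have hlog : Tendsto (fun n => ∑ i ∈ range (p n), Real.log (1 - u n i)) atTop (𝓝 (-l)) := by
    have := herr.sub hsum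
    rw [zero_sub] at this
    refine this.congr fun n => ?_
    rw [← sum_sub_distrib]
    exact sum_congr rfl fun i _ => by ring
  refine ((Real.continuous_exp.tendsto _).comp hlog).congr' ?_
  filter_upwards [hsmall] with n hn
  rw [comp_apply, Real.exp_sum]
  exact prod_congr rfl fun i hi => Real.exp_log (by linarith [(hn i (mem_range.1 hi)).2])

end Triangular

lemma tendsto_zero_of_tendsto_rpow_mul {α : ℝ} {S : ℝ → ℝ} (hα : 0 < α)
    (h : Tendsto (fun y => y ^ α * S y) atTop (𝓝 1)) : Tendsto S atTop (𝓝 0) := by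
  have := (tendsto_rpow_neg_atTop hα).mul h
  rw [zero_mul] at this
  refine this.congr' ?_
  filter_upwards [eventually_gt_atTop 0] with y hy
  rw [Real.rpow_neg hy.le, inv_mul_cancel_left₀ (Real.rpow_pos_of_pos hy α).ne']

lemma tendsto_atTop_of_tendsto_div {t b : ℕ → ℝ} {s : ℝ} (hs : 0 < s)
    (hb : Tendsto b atTop atTop) (ht : Tendsto (fun n => t n / b n) atTop (𝓝 s)) :
    Tendsto t atTop atTop := by
  refine (ht.pos_mul_atTop hs hb).congr' ?_
  filter_upwards [hb.eventually_ne_atTop 0] with n hn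
  exact div_mul_cancel₀ _ hn

section Shift

variable {p : ℕ → ℕ} {σ c t : ℕ → ℝ} {C M : ℝ}

lemma tendsto_shift_div_atTop (hσ : ∀ i, 0 < σ i) (hσC : ∀ i, σ i ≤ C) (hc : ∀ i, |c i| ≤ M)
    (ht : Tendsto t atTop atTop) :
    Tendsto (fun q : ℕ × ℕ => (t q.1 - c q.2) / σ q.2) (triangularAtTop p) atTop := by
  have hC : 0 < C := (hσ 0).trans_le (hσC 0)
  have ht' := ht.comp (tendsto_fst_triangularAtTop (p := p))
  refine tendsto_atTop_mono' _ ?_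
    ((tendsto_atTop_add_const_right _ (-M) ht').atTop_div_const hC)
  filter_upwards [ht'.eventually_ge_atTop M] with q hq
  have hcq := (abs_le.1 (hc q.2)).2
  calc (t q.1 + -M) / C ≤ (t q.1 - M) / σ q.2 :=
        div_le_div_of_nonneg_left (by simp only [comp_apply] at hq; linarith) (hσ q.2) (hσC q.2)
    _ ≤ (t q.1 - c q.2) / σ q.2 := by gcongr; exact (hσ q.2).le

lemma tendsto_div_sub_shift (hc : ∀ i, |c i| ≤ M) (ht : Tendsto t atTop atTop) :
    Tendsto (fun q : ℕ × ℕ => t q.1 / (t q.1 - c q.2)) (triangularAtTop p) (𝓝 1) := by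
  have ht' := ht.comp (tendsto_fst_triangularAtTop (p := p))
  have hct : Tendsto (fun q : ℕ × ℕ => (t q.1)⁻¹ * c q.2) (triangularAtTop p) (𝓝 0) :=
    (tendsto_inv_atTop_zero.comp ht').zero_mul_isBoundedUnder_le
      (isBoundedUnder_of ⟨M, fun q => hc q.2⟩)
  have := (tendsto_const_nhds.sub hct).inv₀ (by norm_num : (1 : ℝ) - 0 ≠ 0)
  rw [sub_zero, inv_one] at this
  refine this.congr' ?_
  filter_upwards [ht'.eventually_ne_atTop 0] with q hq
  simp only [comp_apply] at hq
  field_simp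

end Shift

lemma normConst_rpow {σ : ℕ → ℝ} {α : ℝ} (hσ : ∀ i, 0 ≤ σ i) (hα : α ≠ 0) (p : ℕ) :
    normConst σ α p ^ α = ∑ i ∈ range p, σ i ^ α := by
  rw [normConst, one_div, Real.rpow_inv_rpow (sum_nonneg fun i _ => Real.rpow_nonneg (hσ i) α) hα]

lemma tendsto_normConst_atTop {σ : ℕ → ℝ} {α C : ℝ} {p : ℕ → ℕ} (hα : 0 < α) (hC : 0 < C)
    (hσ : ∀ i, C ≤ σ i) (hp : Tendsto (fun n => (p n : ℝ)) atTop atTop) :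
    Tendsto (fun n => normConst σ α (p n)) atTop atTop := by
  refine tendsto_atTop_mono (fun n => ?_)
    ((tendsto_rpow_atTop (one_div_pos.2 hα)).comp (hp.atTop_mul_const (Real.rpow_pos_of_pos hC α)))
  refine Real.rpow_le_rpow (by positivity) ?_ (one_div_pos.2 hα).le
  simpa [nsmul_eq_mul] using card_nsmul_le_sum (range (p n)) (fun i => σ i ^ α) (C ^ α)
    (fun i _ => Real.rpow_le_rpow hC.le (hσ i) hα.le)

section TailSum

variable {α s C M : ℝ} {S : ℝ → ℝ} {σ c t : ℕ → ℝ} {p : ℕ → ℕ}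

lemma tendsto_sum_div_rpow (hα : 0 < α) (hs : 0 < s) (hσ : ∀ i, 0 < σ i)
    (hb : Tendsto (fun n => normConst σ α (p n)) atTop atTop)
    (ht : Tendsto (fun n => t n / normConst σ α (p n)) atTop (𝓝 s)) :
    Tendsto (fun n => ∑ i ∈ range (p n), (σ i / t n) ^ α) atTop (𝓝 (s ^ (-α))) := by
  have h := (ht.inv₀ hs.ne').rpow_const (p := α) (Or.inl (inv_ne_zero hs.ne'))
  rw [Real.inv_rpow hs.le, ← Real.rpow_neg hs.le] at h
  refine h.congr' ?_
  filter_upwards [(tendsto_atTop_of_tendsto_div hs hb ht).eventually_gt_atTop 0] with n htn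
  have hb0 : 0 ≤ normConst σ α (p n) :=
    Real.rpow_nonneg (sum_nonneg fun i _ => Real.rpow_nonneg (hσ i).le α) _
  simp only [Real.div_rpow (hσ _).le htn.le, ← sum_div, inv_div, Real.div_rpow hb0 htn.le,
    normConst_rpow (fun i => (hσ i).le) hα.ne']

lemma tendsto_sum_tail_shift_div (hα : 0 < α) (hs : 0 < s)
    (htail : Tendsto (fun y => y ^ α * S y) atTop (𝓝 1))
    (hσ : ∀ i, 0 < σ i) (hσC : ∀ i, σ i ≤ C) (hc : ∀ i, |c i| ≤ M)
    (hb : Tendsto (fun n => normConst σ α (p n)) atTop atTop)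
    (ht : Tendsto (fun n => t n / normConst σ α (p n)) atTop (𝓝 s)) :
    Tendsto (fun n => ∑ i ∈ range (p n), S ((t n - c i) / σ i)) atTop (𝓝 (s ^ (-α))) := by
  have htop := tendsto_atTop_of_tendsto_div hs hb ht
  have hM : 0 ≤ M := (abs_nonneg _).trans (hc 0)
  have htpos : ∀ᶠ n in atTop, M < t n := htop.eventually_gt_atTop M
  have hw : ∀ᶠ n in atTop, ∀ i < p n, 0 ≤ (σ i / t n) ^ α := by
    filter_upwards [htpos] with n hn i _
    exact Real.rpow_nonneg (div_nonneg (hσ i).le (by linarith)) α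
  -- `S (yₙᵢ) = (σᵢ / tₙ) ^ α * rₙᵢ` with `yₙᵢ = (tₙ - cᵢ) / σᵢ` and `rₙᵢ → 1` uniformly
  have hr := (htail.comp (tendsto_shift_div_atTop (p := p) hσ hσC hc htop)).mul
    ((tendsto_div_sub_shift hc htop).rpow_const (p := α) (Or.inl one_ne_zero))
  rw [Real.one_rpow, mul_one] at hr
  refine (tendsto_sum_mul_of_tendsto_one (r := fun n i =>
      ((t n - c i) / σ i) ^ α * S ((t n - c i) / σ i) * (t n / (t n - c i)) ^ α)
    hw (tendsto_sum_div_rpow hα hs hσ hb ht) hr).congr' ?_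
  filter_upwards [htpos] with n hn
  refine sum_congr rfl fun i _ => ?_
  have hci := (abs_le.1 (hc i)).2
  have htc : 0 < t n - c i := by linarith
  have htn : 0 < t n := by linarith
  have hone : σ i / t n * ((t n - c i) / σ i) * (t n / (t n - c i)) = 1 := by
    field_simp [(hσ i).ne']
  calc _ = (σ i / t n * ((t n - c i) / σ i) * (t n / (t n - c i))) ^ α
        * S ((t n - c i) / σ i) := by
        rw [Real.mul_rpow (mul_pos (div_pos (hσ i) htn) (div_pos htc (hσ i))).le
            (div_pos htn htc).le,
          Real.mul_rpow (div_pos (hσ i) htn).le (div_pos htc (hσ i)).le]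
        ring
    _ = _ := by rw [hone, Real.one_rpow, one_mul]

lemma tendsto_prod_one_sub_tail_shift_div (hα : 0 < α) (hs : 0 < s) (hS : ∀ y, 0 ≤ S y)
    (htail : Tendsto (fun y => y ^ α * S y) atTop (𝓝 1))
    (hσ : ∀ i, 0 < σ i) (hσC : ∀ i, σ i ≤ C) (hc : ∀ i, |c i| ≤ M)
    (hb : Tendsto (fun n => normConst σ α (p n)) atTop atTop)
    (ht : Tendsto (fun n => t n / normConst σ α (p n)) atTop (𝓝 s)) :
    Tendsto (fun n => ∏ i ∈ range (p n), (1 - S ((t n - c i) / σ i))) atTop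
      (𝓝 (Real.exp (-s ^ (-α)))) :=
  tendsto_prod_one_sub (Eventually.of_forall fun _ _ _ => hS _)
    ((tendsto_zero_of_tendsto_rpow_mul hα htail).comp
      (tendsto_shift_div_atTop hσ hσC hc (tendsto_atTop_of_tendsto_div hs hb ht)))
    (tendsto_sum_tail_shift_div hα hs htail hσ hσC hc hb ht)

end TailSum

lemma Qmax_le_iff {Ω : Type*} {X₁ X₂ : ℕ → Ω → ℝ} {p₁ p₂ : ℕ} (h₁ : 0 < p₁) (h₂ : 0 < p₂)
    {ω : Ω} {t : ℝ} :
    Qmax X₁ X₂ p₁ p₂ ω ≤ t ↔ (∀ i < p₁, X₁ i ω ≤ t) ∧ ∀ j < p₂, X₂ j ω ≤ t := by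
  have : Nonempty (Fin p₁) := ⟨⟨0, h₁⟩⟩
  have : Nonempty (Fin p₂) := ⟨⟨0, h₂⟩⟩
  simp only [Qmax, max_le_iff, ciSup_le_iff (Set.finite_range _).bddAbove, Fin.forall_iff]

section Independence

variable {Ω : Type*} [MeasurableSpace Ω] {P : Measure Ω} {d : ℕ} {Z : Ω → Fin d → ℝ}
  {ε₁ ε₂ : ℕ → Ω → ℝ}

lemma indepFun_factor_noise (hZ : Measurable Z) (hε₁ : ∀ i, Measurable (ε₁ i))
    (hε₂ : ∀ j, Measurable (ε₂ j))
    (hindep : iIndepFun (m := fun i => mixCodomMeasurableSpace d i) (mixFun Z ε₁ ε₂) P) :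
    IndepFun Z (fun ω => (fun i => ε₁ i ω, fun j => ε₂ j ω)) P := by
  have hle : ∀ k, MeasurableSpace.comap (mixFun Z ε₁ ε₂ k) (mixCodomMeasurableSpace d k) ≤ ‹_› := by
    rintro (_ | i | j)
    exacts [hZ.comap_le, (hε₁ i).comap_le, (hε₂ j).comap_le]
  have h := indep_iSup_of_disjoint hle hindep.iIndep
    (S := {Sum.inl ()}) (T := Set.range Sum.inr) (by simp)
  refine indep_of_indep_of_le_right (indep_of_indep_of_le_left h ?_) ?_
  · exact le_iSup₂ (f := fun k (_ : k ∈ ({Sum.inl ()} : Set _)) =>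
      MeasurableSpace.comap (mixFun Z ε₁ ε₂ k) (mixCodomMeasurableSpace d k)) (Sum.inl ()) rfl
  · have hnoise : ∀ k ∈ Set.range (Sum.inr : ℕ ⊕ ℕ → Unit ⊕ ℕ ⊕ ℕ),
        MeasurableSpace.comap (mixFun Z ε₁ ε₂ k) (mixCodomMeasurableSpace d k)
          ≤ ⨆ k ∈ Set.range Sum.inr,
            MeasurableSpace.comap (mixFun Z ε₁ ε₂ k) (mixCodomMeasurableSpace d k) :=
      fun k hk => le_iSup₂ (f := fun k (_ : k ∈ Set.range Sum.inr) =>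
        MeasurableSpace.comap (mixFun Z ε₁ ε₂ k) (mixCodomMeasurableSpace d k)) k hk
    let _ : MeasurableSpace Ω := ⨆ k ∈ Set.range Sum.inr,
      MeasurableSpace.comap (mixFun Z ε₁ ε₂ k) (mixCodomMeasurableSpace d k)
    refine Measurable.comap_le (Measurable.prodMk ?_ ?_) <;>
      refine measurable_pi_lambda _ fun i => (comap_measurable _).mono ?_ le_rfl
    exacts [hnoise (Sum.inr (Sum.inl i)) ⟨_, rfl⟩, hnoise (Sum.inr (Sum.inr i)) ⟨_, rfl⟩]

lemma measure_noise_le_eq_prod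
    (hindep : iIndepFun (m := fun i => mixCodomMeasurableSpace d i) (mixFun Z ε₁ ε₂) P)
    (hid₁ : ∀ i, IdentDistrib (ε₁ i) (ε₁ 0) P P) (hid₂ : ∀ j, IdentDistrib (ε₂ j) (ε₂ 0) P P)
    (p₁ p₂ : ℕ) (c₁ c₂ : ℕ → ℝ) :
    P {ω | (∀ i < p₁, ε₁ i ω ≤ c₁ i) ∧ ∀ j < p₂, ε₂ j ω ≤ c₂ j}
      = (∏ i ∈ range p₁, P {ω | ε₁ 0 ω ≤ c₁ i}) * ∏ j ∈ range p₂, P {ω | ε₂ 0 ω ≤ c₂ j} := by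
  let s : Unit ⊕ ℕ ⊕ ℕ → Set Ω := Sum.elim (fun _ => Set.univ)
    (Sum.elim (fun i => ε₁ i ⁻¹' Set.Iic (c₁ i)) (fun j => ε₂ j ⁻¹' Set.Iic (c₂ j)))
  let T := ((range p₁).disjSum (range p₂)).map (Embedding.inr (α := Unit))
  have hset : {ω | (∀ i < p₁, ε₁ i ω ≤ c₁ i) ∧ ∀ j < p₂, ε₂ j ω ≤ c₂ j} = ⋂ k ∈ T, s k := by
    ext ω
    simp [T, s, Sum.forall]
  have hs : ∀ k ∈ T,
      MeasurableSet[(mixCodomMeasurableSpace d k).comap (mixFun Z ε₁ ε₂ k)] (s k) := by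
    rintro (_ | i | j) _
    exacts [MeasurableSet.univ, ⟨_, (measurableSet_Iic : MeasurableSet (Set.Iic (c₁ i))), rfl⟩,
      ⟨_, (measurableSet_Iic : MeasurableSet (Set.Iic (c₂ j))), rfl⟩]
  rw [hset, hindep.meas_biInter hs, prod_map, prod_disjSum]
  congr 1 <;> refine prod_congr rfl fun i _ => ?_
  exacts [(hid₁ i).measure_mem_eq measurableSet_Iic, (hid₂ i).measure_mem_eq measurableSet_Iic]

end Independence

section Factorization

variable {Ω : Type*} [MeasurableSpace Ω] {P : Measure Ω} [IsFiniteMeasure P]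

lemma ProbabilityTheory.IndepFun.measureReal_preimage_eq_integral {β γ : Type*}
    [MeasurableSpace β] [MeasurableSpace γ] {Z : Ω → β} {V : Ω → γ} (h : IndepFun Z V P)
    (hZ : Measurable Z) (hV : Measurable V) {S : Set (β × γ)} (hS : MeasurableSet S) :
    P.real {ω | (Z ω, V ω) ∈ S} = ∫ ω, P.real {ω' | (Z ω, V ω') ∈ S} ∂P := by
  have hslice : Measurable fun z => (P.map V) (Prod.mk z ⁻¹' S) :=
    measurable_measure_prodMk_left hS
  have hslice_real : Measurable fun z => (P.map V).real (Prod.mk z ⁻¹' S) :=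
    hslice.ennreal_toReal
  calc P.real {ω | (Z ω, V ω) ∈ S} = ((P.map Z).prod (P.map V)).real S := by
        rw [← h.map_prod_eq_prod_map_map hZ.aemeasurable hV.aemeasurable,
          map_measureReal_apply (hZ.prodMk hV) hS]
        rfl
    _ = ∫ z, (P.map V).real (Prod.mk z ⁻¹' S) ∂(P.map Z) := by
        rw [measureReal_def, Measure.prod_apply hS,
          ← integral_toReal hslice.aemeasurable (ae_of_all _ fun _ => measure_lt_top _ _)]
        rfl
    _ = ∫ ω, P.real {ω' | (Z ω, V ω') ∈ S} ∂P := by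
        rw [integral_map hZ.aemeasurable hslice_real.aestronglyMeasurable]
        exact integral_congr_ae (ae_of_all _ fun ω =>
          map_measureReal_apply hV (measurable_prodMk_left hS))

lemma Measurable.measureReal_setOf_le {α : Type*} [MeasurableSpace α] {ε : Ω → ℝ}
    {γ : α → ℝ} (hγ : Measurable γ) : Measurable fun a => P.real {ω | ε ω ≤ γ a} := by
  have hmono : Monotone fun y => P.real {ω | ε ω ≤ y} :=
    fun _ _ hy => measureReal_mono fun _ hω => le_trans hω hy
  exact hmono.measurable.comp hγ

variable {d : ℕ} {Z : Ω → Fin d → ℝ} {ε₁ ε₂ : ℕ → Ω → ℝ}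

lemma measureReal_noise_le_eq_integral (hZ : Measurable Z) (hε₁ : ∀ i, Measurable (ε₁ i))
    (hε₂ : ∀ j, Measurable (ε₂ j))
    (hid₁ : ∀ i, IdentDistrib (ε₁ i) (ε₁ 0) P P) (hid₂ : ∀ j, IdentDistrib (ε₂ j) (ε₂ 0) P P)
    (hindep : iIndepFun (m := fun i => mixCodomMeasurableSpace d i) (mixFun Z ε₁ ε₂) P)
    (p₁ p₂ : ℕ) {γ₁ γ₂ : ℕ → (Fin d → ℝ) → ℝ} (hγ₁ : ∀ i, Measurable (γ₁ i))
    (hγ₂ : ∀ j, Measurable (γ₂ j)) :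
    P.real {ω | (∀ i < p₁, ε₁ i ω ≤ γ₁ i (Z ω)) ∧ ∀ j < p₂, ε₂ j ω ≤ γ₂ j (Z ω)}
      = ∫ ω, (∏ i ∈ range p₁, P.real {ω' | ε₁ 0 ω' ≤ γ₁ i (Z ω)})
          * ∏ j ∈ range p₂, P.real {ω' | ε₂ 0 ω' ≤ γ₂ j (Z ω)} ∂P := by
  have hS : MeasurableSet {q : (Fin d → ℝ) × (ℕ → ℝ) × (ℕ → ℝ) |
      (∀ i < p₁, q.2.1 i ≤ γ₁ i q.1) ∧ ∀ j < p₂, q.2.2 j ≤ γ₂ j q.1} := by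
    measurability
  refine ((indepFun_factor_noise hZ hε₁ hε₂ hindep).measureReal_preimage_eq_integral hZ
    (by measurability) hS).trans (integral_congr_ae (ae_of_all _ fun ω => ?_))
  simp only [measureReal_def, ← ENNReal.toReal_prod, ← ENNReal.toReal_mul]
  rw [← measure_noise_le_eq_prod hindep hid₁ hid₂]
  rfl

lemma measureReal_Qmax_le_eq_integral {f g : ℕ → (Fin d → ℝ) → ℝ} {σ σt : ℕ → ℝ}
    {X₁ X₂ : ℕ → Ω → ℝ} (hZ : Measurable Z) (hf : ∀ i, Measurable (f i))
    (hg : ∀ j, Measurable (g j)) (hσ : ∀ i, 0 < σ i) (hσt : ∀ j, 0 < σt j)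
    (hε₁ : ∀ i, Measurable (ε₁ i)) (hε₂ : ∀ j, Measurable (ε₂ j))
    (hid₁ : ∀ i, IdentDistrib (ε₁ i) (ε₁ 0) P P) (hid₂ : ∀ j, IdentDistrib (ε₂ j) (ε₂ 0) P P)
    (hindep : iIndepFun (m := fun i => mixCodomMeasurableSpace d i) (mixFun Z ε₁ ε₂) P)
    (hX₁ : ∀ i ω, X₁ i ω = f i (Z ω) + σ i * ε₁ i ω)
    (hX₂ : ∀ j ω, X₂ j ω = g j (Z ω) + σt j * ε₂ j ω)
    {p₁ p₂ : ℕ} (h₁ : 0 < p₁) (h₂ : 0 < p₂) (t : ℝ) :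
    P.real {ω | Qmax X₁ X₂ p₁ p₂ ω ≤ t}
      = ∫ ω, (∏ i ∈ range p₁, P.real {ω' | ε₁ 0 ω' ≤ (t - f i (Z ω)) / σ i})
          * ∏ j ∈ range p₂, P.real {ω' | ε₂ 0 ω' ≤ (t - g j (Z ω)) / σt j} ∂P := by
  rw [← measureReal_noise_le_eq_integral (γ₁ := fun i z => (t - f i z) / σ i)
    (γ₂ := fun j z => (t - g j z) / σt j) hZ hε₁ hε₂ hid₁ hid₂ hindep _ _
    (fun i => (measurable_const.sub (hf i)).div_const _)
    (fun j => (measurable_const.sub (hg j)).div_const _)]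
  congr 1
  ext ω
  simp only [Set.mem_ofPred_eq, Qmax_le_iff h₁ h₂, hX₁, hX₂, le_div_iff₀ (hσ _),
    le_div_iff₀ (hσt _), le_sub_iff_add_le', mul_comm (ε₁ _ _), mul_comm (ε₂ _ _)]

end Factorization

section Limit

variable {Ω : Type*} [MeasurableSpace Ω] {P : Measure Ω} [IsProbabilityMeasure P]

lemma abs_prod_measureReal_le_one {ι : Type*} (s : Finset ι) (A : ι → Set Ω) :
    |∏ i ∈ s, P.real (A i)| ≤ 1 := by
  rw [abs_prod]
  exact prod_le_one (fun _ _ => abs_nonneg _) fun _ _ =>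
    (abs_of_nonneg measureReal_nonneg).trans_le measureReal_le_one

lemma tendsto_integral_of_abs_le_one {G : ℕ → Ω → ℝ} {L : ℝ}
    (hG : ∀ n, AEStronglyMeasurable (G n) P) (hle : ∀ n ω, |G n ω| ≤ 1)
    (hlim : ∀ᵐ ω ∂P, Tendsto (fun n => G n ω) atTop (𝓝 L)) :
    Tendsto (fun n => ∫ ω, G n ω ∂P) atTop (𝓝 L) := by
  simpa using tendsto_integral_of_dominated_convergence (fun _ => 1) hG (integrable_const 1)
    (fun n => ae_of_all _ (hle n)) hlim

lemma tendsto_prod_measureReal_le {α s C M : ℝ} {ε : Ω → ℝ} {σ c t : ℕ → ℝ} {p : ℕ → ℕ}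
    (hε : Measurable ε) (hα : 0 < α) (hs : 0 < s)
    (htail : Tendsto (fun y => y ^ α * P.real {ω | y < ε ω}) atTop (𝓝 1))
    (hσ : ∀ i, 0 < σ i) (hσC : ∀ i, σ i ≤ C) (hc : ∀ i, |c i| ≤ M)
    (hb : Tendsto (fun n => normConst σ α (p n)) atTop atTop)
    (ht : Tendsto (fun n => t n / normConst σ α (p n)) atTop (𝓝 s)) :
    Tendsto (fun n => ∏ i ∈ range (p n), P.real {ω | ε ω ≤ (t n - c i) / σ i}) atTop
      (𝓝 (Real.exp (-s ^ (-α)))) := by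
  refine (tendsto_prod_one_sub_tail_shift_div hα hs (fun _ => measureReal_nonneg) htail hσ hσC hc
    hb ht).congr fun n => prod_congr rfl fun i _ => ?_
  rw [← probReal_compl_eq_one_sub (measurableSet_lt measurable_const hε)]
  congr 1
  ext ω
  simp [not_lt]

end Limit

lemma tendsto_measureReal_Qmax_le {Ω : Type*} [MeasurableSpace Ω] {P : Measure Ω}
    [IsProbabilityMeasure P] {d : ℕ} {Z : Ω → Fin d → ℝ} {f g : ℕ → (Fin d → ℝ) → ℝ}
    {C₁ C₂ α s₁ s₂ : ℝ} {σ σt t : ℕ → ℝ} {ε₁ ε₂ X₁ X₂ : ℕ → Ω → ℝ} {p₁ p₂ : ℕ → ℕ}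
    (hZ : Measurable Z) (hf : ∀ i, Measurable (f i)) (hg : ∀ j, Measurable (g j))
    (hfbdd : ∀ᵐ ω ∂P, ∃ M : ℝ, ∀ i, |f i (Z ω)| ≤ M)
    (hgbdd : ∀ᵐ ω ∂P, ∃ M : ℝ, ∀ j, |g j (Z ω)| ≤ M)
    (hC₁ : 0 < C₁) (hσ : ∀ i, σ i ∈ Set.Icc C₁ C₂) (hσt : ∀ j, σt j ∈ Set.Icc C₁ C₂)
    (hα : 0 < α) (hε₁ : ∀ i, Measurable (ε₁ i)) (hε₂ : ∀ j, Measurable (ε₂ j))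
    (hid₁ : ∀ i, IdentDistrib (ε₁ i) (ε₁ 0) P P) (hid₂ : ∀ j, IdentDistrib (ε₂ j) (ε₂ 0) P P)
    (hindep : iIndepFun (m := fun i => mixCodomMeasurableSpace d i) (mixFun Z ε₁ ε₂) P)
    (htail₁ : Tendsto (fun y => y ^ α * P.real {ω | y < ε₁ 0 ω}) atTop (𝓝 1))
    (htail₂ : Tendsto (fun y => y ^ α * P.real {ω | y < ε₂ 0 ω}) atTop (𝓝 1))
    (hX₁ : ∀ i ω, X₁ i ω = f i (Z ω) + σ i * ε₁ i ω)
    (hX₂ : ∀ j ω, X₂ j ω = g j (Z ω) + σt j * ε₂ j ω)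
    (hp₁ : Tendsto (fun n => (p₁ n : ℝ)) atTop atTop)
    (hp₂ : Tendsto (fun n => (p₂ n : ℝ)) atTop atTop) (hs₁ : 0 < s₁) (hs₂ : 0 < s₂)
    (ht₁ : Tendsto (fun n => t n / normConst σ α (p₁ n)) atTop (𝓝 s₁))
    (ht₂ : Tendsto (fun n => t n / normConst σt α (p₂ n)) atTop (𝓝 s₂)) :
    Tendsto (fun n => P.real {ω | Qmax X₁ X₂ (p₁ n) (p₂ n) ω ≤ t n}) atTop
      (𝓝 (Real.exp (-s₁ ^ (-α)) * Real.exp (-s₂ ^ (-α)))) := by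
  have hσ₀ : ∀ i, 0 < σ i := fun i => hC₁.trans_le (hσ i).1
  have hσt₀ : ∀ j, 0 < σt j := fun j => hC₁.trans_le (hσt j).1
  have hfactor : ∀ᶠ n in atTop, P.real {ω | Qmax X₁ X₂ (p₁ n) (p₂ n) ω ≤ t n}
      = ∫ ω, (∏ i ∈ range (p₁ n), P.real {ω' | ε₁ 0 ω' ≤ (t n - f i (Z ω)) / σ i})
          * ∏ j ∈ range (p₂ n), P.real {ω' | ε₂ 0 ω' ≤ (t n - g j (Z ω)) / σt j} ∂P := by
    filter_upwards [hp₁.eventually_gt_atTop 0, hp₂.eventually_gt_atTop 0] with n h₁ h₂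
    exact measureReal_Qmax_le_eq_integral hZ hf hg hσ₀ hσt₀ hε₁ hε₂ hid₁ hid₂ hindep hX₁ hX₂
      (Nat.cast_pos.1 h₁) (Nat.cast_pos.1 h₂) _
  refine (tendsto_integral_of_abs_le_one (fun n => ?_) (fun n ω => ?_) ?_).congr'
    (hfactor.mono fun n hn => hn.symm)
  · refine (Measurable.mul ?_ ?_).aestronglyMeasurable <;>
      refine measurable_prod _ fun i _ => Measurable.measureReal_setOf_le ?_ <;>
      fun_prop
  · rw [abs_mul]
    exact mul_le_one₀ (abs_prod_measureReal_le_one _ _) (abs_nonneg _)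
      (abs_prod_measureReal_le_one _ _)
  · filter_upwards [hfbdd, hgbdd] with ω ⟨M₁, hM₁⟩ ⟨M₂, hM₂⟩
    exact (tendsto_prod_measureReal_le (hε₁ 0) hα hs₁ htail₁ hσ₀ (fun i => (hσ i).2) hM₁
      (tendsto_normConst_atTop hα hC₁ (fun i => (hσ i).1) hp₁) ht₁).mul
      (tendsto_prod_measureReal_le (hε₂ 0) hα hs₂ htail₂ hσt₀ (fun j => (hσt j).2) hM₂
      (tendsto_normConst_atTop hα hC₁ (fun j => (hσt j).1) hp₂) ht₂)

theorem prop2_case2_sub1_general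
    {Ω : Type*} [MeasurableSpace Ω] (P : Measure Ω) [IsProbabilityMeasure P]
    (d : ℕ) (Z : Ω → Fin d → ℝ) (hZm : Measurable Z)
    (f g : ℕ → (Fin d → ℝ) → ℝ) (hfm : ∀ i, Measurable (f i)) (hgm : ∀ j, Measurable (g j))
    (hfbdd : ∀ᵐ ω ∂P, ∃ M : ℝ, ∀ i, |f i (Z ω)| ≤ M)
    (hgbdd : ∀ᵐ ω ∂P, ∃ M : ℝ, ∀ j, |g j (Z ω)| ≤ M)
    (C₁ C₂ : ℝ) (hC₁ : 0 < C₁)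
    (σ σt : ℕ → ℝ) (hσ : ∀ i, σ i ∈ Set.Icc C₁ C₂) (hσt : ∀ j, σt j ∈ Set.Icc C₁ C₂)
    (α₁ α₂ : ℝ) (hα₁ : 0 < α₁)
    (ε₁ ε₂ : ℕ → Ω → ℝ) (hε₁m : ∀ i, Measurable (ε₁ i)) (hε₂m : ∀ j, Measurable (ε₂ j))
    (hid₁ : ∀ i, IdentDistrib (ε₁ i) (ε₁ 0) P P)
    (hid₂ : ∀ j, IdentDistrib (ε₂ j) (ε₂ 0) P P)
    (hindep : iIndepFun (m := fun i => mixCodomMeasurableSpace d i) (mixFun Z ε₁ ε₂) P)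
    (htail₁ : Tendsto (fun x : ℝ => x ^ α₁ * (P {ω | x < ε₁ 0 ω}).toReal) atTop (nhds 1))
    (htail₂ : Tendsto (fun x : ℝ => x ^ α₂ * (P {ω | x < ε₂ 0 ω}).toReal) atTop (nhds 1))
    (X₁ X₂ : ℕ → Ω → ℝ)
    (hX₁ : ∀ i ω, X₁ i ω = f i (Z ω) + σ i * ε₁ i ω)
    (hX₂ : ∀ j ω, X₂ j ω = g j (Z ω) + σt j * ε₂ j ω)
    (p₁ p₂ : ℕ → ℕ)
    (hp₁ : Tendsto (fun n => (p₁ n : ℝ)) atTop atTop)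
    (hp₂ : Tendsto (fun n => (p₂ n : ℝ)) atTop atTop)
    (α : ℝ) (hα₁α : α₁ = α) (hα₂α : α₂ = α)
    (a : ℝ) (ha : 0 < a)
    (hnorm : Tendsto (fun n => normConst σ α₁ (p₁ n) / normConst σt α₂ (p₂ n)) atTop (nhds a)) :
    ∀ x : ℝ, 0 < x →
      Tendsto (fun n => (P {ω | Qmax X₁ X₂ (p₁ n) (p₂ n) ω ≤ normConst σ α₁ (p₁ n) * x}).toReal) atTop
        (nhds (frechetCDF α x * frechetCDF α (a * x))) := by
  subst α₁ α₂
  intro x hx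
  have hb₁ := tendsto_normConst_atTop hα₁ hC₁ (fun i => (hσ i).1) hp₁
  rw [frechetCDF, frechetCDF, if_pos hx, if_pos (mul_pos ha hx)]
  refine tendsto_measureReal_Qmax_le hZm hfm hgm hfbdd hgbdd hC₁ hσ hσt hα₁ hε₁m hε₂m hid₁ hid₂
    hindep htail₁ htail₂ hX₁ hX₂ hp₁ hp₂ hx (mul_pos ha hx) ?_
    ((hnorm.mul_const x).congr fun n => (mul_div_right_comm _ _ _).symm)
  refine tendsto_const_nhds.congr' ?_
  filter_upwards [hb₁.eventually_ne_atTop 0] with n hn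
  exact (mul_div_cancel_left₀ x hn).symm

/-- Prop. 2, Case 2, first subcase: `α₁ = α₂ = α`, `p₁/p₂ → C > 0`, `a₁/a₂ → a > 0` imply `P(Q ≤ a₁ x) → Ψ_α(x)·Ψ_α(a x)` for all `x > 0`. -/
theorem prop2_case2_sub1
    {Ω : Type*} [MeasurableSpace Ω] (P : Measure Ω) [IsProbabilityMeasure P]
    (d : ℕ) (Z : Ω → Fin d → ℝ) (hZm : Measurable Z)
    (f g : ℕ → (Fin d → ℝ) → ℝ) (hfm : ∀ i, Measurable (f i)) (hgm : ∀ j, Measurable (g j))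
    (hfbdd : ∀ᵐ ω ∂P, ∃ M : ℝ, ∀ i, |f i (Z ω)| ≤ M)
    (hgbdd : ∀ᵐ ω ∂P, ∃ M : ℝ, ∀ j, |g j (Z ω)| ≤ M)
    (C₁ C₂ : ℝ) (hC₁ : 0 < C₁) (hC₁₂ : C₁ ≤ C₂)
    (σ σt : ℕ → ℝ) (hσ : ∀ i, σ i ∈ Set.Icc C₁ C₂) (hσt : ∀ j, σt j ∈ Set.Icc C₁ C₂)
    (α₁ α₂ : ℝ) (hα₁ : 0 < α₁) (hα₂ : 0 < α₂)
    (ε₁ ε₂ : ℕ → Ω → ℝ) (hε₁m : ∀ i, Measurable (ε₁ i)) (hε₂m : ∀ j, Measurable (ε₂ j))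
    (hid₁ : ∀ i, IdentDistrib (ε₁ i) (ε₁ 0) P P)
    (hid₂ : ∀ j, IdentDistrib (ε₂ j) (ε₂ 0) P P)
    (hindep : iIndepFun (m := fun i => mixCodomMeasurableSpace d i) (mixFun Z ε₁ ε₂) P)
    (htail₁ : Tendsto (fun x : ℝ => x ^ α₁ * (P {ω | x < ε₁ 0 ω}).toReal) atTop (nhds 1))
    (htail₂ : Tendsto (fun x : ℝ => x ^ α₂ * (P {ω | x < ε₂ 0 ω}).toReal) atTop (nhds 1))
    (X₁ X₂ : ℕ → Ω → ℝ)
    (hX₁ : ∀ i ω, X₁ i ω = f i (Z ω) + σ i * ε₁ i ω)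
    (hX₂ : ∀ j ω, X₂ j ω = g j (Z ω) + σt j * ε₂ j ω)
    (p₁ p₂ : ℕ → ℕ) (hp₁pos : ∀ n, 0 < p₁ n) (hp₂pos : ∀ n, 0 < p₂ n)
    (hp₁ : Tendsto (fun n => (p₁ n : ℝ)) atTop atTop)
    (hp₂ : Tendsto (fun n => (p₂ n : ℝ)) atTop atTop)
    (α : ℝ) (hα₁α : α₁ = α) (hα₂α : α₂ = α)
    (C : ℝ) (hC : 0 < C)
    (hratio : Tendsto (fun n => (p₁ n : ℝ) / (p₂ n : ℝ)) atTop (nhds C))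
    (a : ℝ) (ha : 0 < a)
    (hnorm : Tendsto (fun n => normConst σ α₁ (p₁ n) / normConst σt α₂ (p₂ n)) atTop (nhds a)) :
    ∀ x : ℝ, 0 < x →
      Tendsto (fun n => (P {ω | Qmax X₁ X₂ (p₁ n) (p₂ n) ω ≤ normConst σ α₁ (p₁ n) * x}).toReal) atTop
        (nhds (frechetCDF α x * frechetCDF α (a * x))) :=
  prop2_case2_sub1_general P d Z hZm f g hfm hgm hfbdd hgbdd C₁ C₂ hC₁ σ σt hσ hσt α₁ α₂ hα₁ ε₁ ε₂
    hε₁m hε₂m hid₁ hid₂ hindep htail₁ htail₂ X₁ X₂ hX₁ hX₂ p₁ p₂ hp₁ hp₂ α hα₁α hα₂α a ha hnorm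
end
end
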